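/- Stabilization of the normalized theta symbol: fix natural numbers α, β, γ and for each N ∈ ℕ define Θ̂_N = ((1 − q^{α+β+γ+3N+1})/(1 − q)) · (q;q)_{α+β+γ+3N} / ((q;q)_{α+N} (q;q)_{β+N} (q;q)_{γ+N}) ∈ ℤ[[q]]. Then Θ̂_N converges coefficientwise to 1/((1−q) · (q;q)_∞²), i.e., for every d ∈ ℕ there exists N₀ such that for all N ≥ N₀ the coefficient of q^d in Θ̂_N equals the coefficient of q^d in (1−q)^{−1} (q;q)_∞^{−2}. -/

import Mathlib

/-!
Reading off the coefficient of `q^d` only sees a series modulo `q^(d+1)`. Modulo `q^(d+1)` we have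
`(q;q)_n ≡ (q;q)_∞` as soon as `n ≥ d`, and `q^(α+β+γ+3N+1) ≡ 0`, so for `N ≥ d` the series `Θ̂_N`
is congruent to `(q;q)_∞ / ((1 - q) (q;q)_∞³) = 1 / ((1 - q) (q;q)_∞²)`.
-/

noncomputable section
open PowerSeries

/-- `(q;q)_n = ∏_{j=1}^n (1 - q^j)`. -/
def qPoch (n : ℕ) : PowerSeries ℤ :=
  ∏ j ∈ Finset.range n, (1 - (X : PowerSeries ℤ) ^ (j + 1))

/-- `(q;q)_∞`, the q-adic limit of `(q;q)_n`. -/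
def qPochInf : PowerSeries ℤ := PowerSeries.mk fun d => coeff d (qPoch d)

theorem IsUnit.map_ringInverse {M₀ N₀ F : Type*} [MonoidWithZero M₀] [MonoidWithZero N₀]
    [FunLike F M₀ N₀] [MonoidHomClass F M₀ N₀] {a : M₀} (ha : IsUnit a) (f : F) :
    f (Ring.inverse a) = Ring.inverse (f a) := by
  obtain ⟨u, rfl⟩ := ha
  rw [Ring.inverse_unit]
  exact (Ring.inverse_unit (Units.map (f : M₀ →* N₀) u)).symm

namespace PowerSeries

variable {R : Type*} [CommRing R]

theorem isUnit_one_sub_X : IsUnit (1 - X : R⟦X⟧) := by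
  simp [isUnit_iff_constantCoeff]

theorem coeff_eq_of_mk_eq {d : ℕ} {f g : R⟦X⟧}
    (h : Ideal.Quotient.mk (Ideal.span {X ^ (d + 1)}) f =
      Ideal.Quotient.mk (Ideal.span {X ^ (d + 1)}) g) :
    coeff d f = coeff d g := by
  rw [Ideal.Quotient.eq, Ideal.mem_span_singleton, X_pow_dvd_iff] at h
  simpa [sub_eq_zero] using h d d.lt_succ_self

end PowerSeries

theorem qPoch_succ (n : ℕ) : qPoch (n + 1) = qPoch n * (1 - X ^ (n + 1)) :=
  Finset.prod_range_succ _ n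

theorem constantCoeff_qPoch (n : ℕ) : constantCoeff (qPoch n) = 1 := by
  simp [qPoch]

theorem isUnit_qPoch (n : ℕ) : IsUnit (qPoch n) := by
  simp [isUnit_iff_constantCoeff, constantCoeff_qPoch]

theorem X_pow_succ_dvd_qPoch_sub_qPoch {m n : ℕ} (h : m ≤ n) :
    (X : PowerSeries ℤ) ^ (m + 1) ∣ qPoch n - qPoch m := by
  induction n, h using Nat.le_induction with
  | base => simp
  | succ n hmn ih =>
    rw [qPoch_succ, show qPoch n * (1 - X ^ (n + 1)) - qPoch m =
      (qPoch n - qPoch m) - X ^ (n + 1) * qPoch n by ring]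
    exact dvd_sub ih (dvd_mul_of_dvd_left (pow_dvd_pow _ (by omega)) _)

theorem coeff_qPochInf {j n : ℕ} (h : j ≤ n) : coeff j qPochInf = coeff j (qPoch n) := by
  have := X_pow_dvd_iff.mp (X_pow_succ_dvd_qPoch_sub_qPoch h) j j.lt_succ_self
  rw [qPochInf, coeff_mk, ← sub_eq_zero, ← map_sub, ← neg_sub, map_neg, this, neg_zero]

theorem X_pow_succ_dvd_qPochInf_sub_qPoch (n : ℕ) :
    (X : PowerSeries ℤ) ^ (n + 1) ∣ qPochInf - qPoch n :=
  X_pow_dvd_iff.mpr fun j hj => by rw [map_sub, coeff_qPochInf (n := n) (by omega), sub_self]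

theorem isUnit_qPochInf : IsUnit qPochInf := by
  rw [isUnit_iff_constantCoeff, ← coeff_zero_eq_constantCoeff_apply, coeff_qPochInf le_rfl,
    coeff_zero_eq_constantCoeff_apply, constantCoeff_qPoch]
  exact isUnit_one

theorem stmt4 (α β γ : ℕ) (d : ℕ) :
    ∃ N₀ : ℕ, ∀ N : ℕ, N₀ ≤ N →
      coeff d ((1 - (X : PowerSeries ℤ) ^ (α + β + γ + 3 * N + 1)) *
          Ring.inverse (1 - (X : PowerSeries ℤ)) *
          (qPoch (α + β + γ + 3 * N) *
            Ring.inverse (qPoch (α + N) * qPoch (β + N) * qPoch (γ + N))))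
      = coeff d (Ring.inverse ((1 - (X : PowerSeries ℤ)) * qPochInf ^ 2)) := by
  refine ⟨d, fun N hN => coeff_eq_of_mk_eq ?_⟩
  set π := Ideal.Quotient.mk (Ideal.span {(X : PowerSeries ℤ) ^ (d + 1)})
  have hπX : π (X ^ (α + β + γ + 3 * N + 1)) = 0 := by
    rw [Ideal.Quotient.eq_zero_iff_mem, Ideal.mem_span_singleton]
    exact pow_dvd_pow _ (by omega)
  have hπP {n : ℕ} (hn : d ≤ n) : π (qPoch n) = π qPochInf := by
    rw [Ideal.Quotient.eq, Ideal.mem_span_singleton, ← neg_sub, dvd_neg]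
    exact (pow_dvd_pow _ (by omega)).trans (X_pow_succ_dvd_qPochInf_sub_qPoch n)
  rw [map_mul, map_mul, map_mul, isUnit_one_sub_X.map_ringInverse π,
    (((isUnit_qPoch _).mul (isUnit_qPoch _)).mul (isUnit_qPoch _)).map_ringInverse π,
    (isUnit_one_sub_X.mul (isUnit_qPochInf.pow 2)).map_ringInverse π]
  simp only [map_mul, map_sub, map_one, map_pow, hπX, hπP (show d ≤ α + β + γ + 3 * N by omega),
    hπP (show d ≤ α + N by omega), hπP (show d ≤ β + N by omega), hπP (show d ≤ γ + N by omega)]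
  obtain ⟨u, hu⟩ := isUnit_qPochInf.map π
  obtain ⟨v, hv⟩ : IsUnit (1 - π X) := by simpa using isUnit_one_sub_X.map π
  rw [← hu, ← hv, sub_zero, one_mul]
  simp only [← Units.val_mul, ← Units.val_pow_eq_pow_val, Ring.inverse_unit]
  congr 1
  rw [mul_comm v⁻¹, mul_inv_rev]
  group
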